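/- The maximum bottleneck capacity between any two vertices of a finite weighted graph is achieved on a maximum spanning forest: for all u, v, the bottleneck capacity in G equals the bottleneck capacity in any maximum-weight spanning forest of G. -/

import Mathlib

/-!
Every edge `ab` of `G` is joined in `F` by a path whose edges all weigh at least `w(ab)`: if an
edge `f` of that path were lighter, exchanging `f` for `ab` would give a heavier spanning forest.
Indeed, deleting `f` from the forest separates `a` from `b`, so adding `ab` creates no cycle and
reconnects the two sides of `f`. Hence a walk in `G` whose weights are all `≥ r` can be rerouted
edge by edge through `F`; the converse holds because `F ⊆ G`.
-/

namespace SimpleGraph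

variable {V : Type*} {G H H' T : SimpleGraph V}

theorem reachable_deleteEdges_setOf_not_iff {P : Sym2 V → Prop} {u v : V} :
    (G.deleteEdges {e | ¬P e}).Reachable u v ↔ ∃ p : G.Walk u v, ∀ e ∈ p.edges, P e := by
  constructor
  · rintro ⟨p⟩
    refine ⟨p.mapLe (deleteEdges_le _), fun e he => ?_⟩
    rw [Walk.edges_mapLe_eq_edges] at he
    exact not_not.mp ((edgeSet_deleteEdges _) ▸ p.edges_subset_edgeSet he).2
  · rintro ⟨p, hp⟩
    exact ⟨p.toDeleteEdges _ fun e he => not_not.mpr (hp e he)⟩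

theorem reachable_le_of_adj_le_reachable (h : H.Adj ≤ H'.Reachable) :
    H.Reachable ≤ H'.Reachable := by
  simp only [reachable_eq_reflTransGen] at h ⊢
  exact Relation.reflTransGen_closed h

theorem Reachable.elim_sup_edge {x y u v : V} (h : (H ⊔ edge x y).Reachable u v) :
    H.Reachable u v ∨ H.Reachable u x ∧ H.Reachable y v ∨ H.Reachable u y ∧ H.Reachable x v := by
  obtain ⟨p⟩ := h
  induction p with
  | nil => exact Or.inl .rfl
  | @cons u c v hadj _ ih =>
    rw [sup_adj, edge_adj] at hadj
    rcases hadj with hH | ⟨⟨rfl, rfl⟩ | ⟨rfl, rfl⟩, -⟩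
    · have := hH.reachable
      grind [Reachable.trans]
    · grind [Reachable.refl]
    · grind [Reachable.refl]

theorem Reachable.sup_edge_swap {a b x y : V} (hab : ¬H.Reachable a b)
    (h : (H ⊔ edge x y).Reachable a b) : (H ⊔ edge a b).Reachable x y := by
  have hab' : (H ⊔ edge a b).Reachable a b :=
    Adj.reachable <| (sup_adj _ _ _ _).mpr <| Or.inr <| (edge_adj ..).mpr
      ⟨Or.inl ⟨rfl, rfl⟩, fun h => hab (h ▸ .rfl)⟩
  have hle : H ≤ H ⊔ edge a b := le_sup_left
  rcases h.elim_sup_edge with h | ⟨hax, hyb⟩ | ⟨hay, hxb⟩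
  · exact absurd h hab
  · exact (hax.symm.mono hle).trans (hab'.trans (hyb.symm.mono hle))
  · exact (hxb.mono hle).trans (hab'.symm.trans (hay.mono hle))

theorem IsAcyclic.not_reachable_deleteEdges {a b : V} {f : Sym2 V} (hT : T.IsAcyclic)
    {q : T.Walk a b} (hq : q.IsPath) (hf : f ∈ q.edges) : ¬(T.deleteEdges {f}).Reachable a b := by
  classical
  rintro ⟨p⟩
  let p' : T.Walk a b := p.mapLe (deleteEdges_le _)
  have hq' : p'.toPath = ⟨q, hq⟩ := (hT.subsingleton_path a b).elim _ _
  have hfp : f ∈ p.edges := by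
    rw [← Walk.edges_mapLe_eq_edges (deleteEdges_le {f})]
    exact p'.edges_toPath_subset_edges (by rw [hq']; exact hf)
  exact ((edgeSet_deleteEdges _) ▸ p.edges_subset_edgeSet hfp).2 rfl

theorem IsAcyclic.deleteEdges_sup_edge {a b : V} {f : Sym2 V} (hT : T.IsAcyclic)
    {q : T.Walk a b} (hq : q.IsPath) (hf : f ∈ q.edges) :
    (T.deleteEdges {f} ⊔ edge a b).IsAcyclic :=
  (hT.anti (deleteEdges_le _)).sup_edge_of_not_reachable (hT.not_reachable_deleteEdges hq hf)

theorem IsAcyclic.reachable_le_deleteEdges_sup_edge {a b x y : V} (hT : T.IsAcyclic)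
    {q : T.Walk a b} (hq : q.IsPath) (hf : s(x, y) ∈ q.edges) :
    T.Reachable ≤ (T.deleteEdges {s(x, y)} ⊔ edge a b).Reachable := by
  set T₀ := T.deleteEdges {s(x, y)}
  have hT_le : T ≤ T₀ ⊔ edge x y := le_sdiff_sup
  have hxy : (T₀ ⊔ edge a b).Reachable x y :=
    Reachable.sup_edge_swap (hT.not_reachable_deleteEdges hq hf) (q.reachable.mono hT_le)
  refine fun u v huv => reachable_le_of_adj_le_reachable (fun u v h => ?_) u v (huv.mono hT_le)
  rw [sup_adj, edge_adj] at h
  rcases h with h | ⟨⟨rfl, rfl⟩ | ⟨rfl, rfl⟩, -⟩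
  · exact h.reachable.mono le_sup_left
  · exact hxy
  · exact hxy.symm

end SimpleGraph

open SimpleGraph

theorem weight_le_of_mem_edges_of_isPath {V : Type*} {G : SimpleGraph V} {w : Sym2 V → ℝ}
    {F : Finset (Sym2 V)} (hFsub : (F : Set (Sym2 V)) ⊆ G.edgeSet)
    (hFacyclic : (fromEdgeSet (F : Set (Sym2 V))).IsAcyclic)
    (hFspanning : ∀ u v : V, G.Reachable u v → (fromEdgeSet (F : Set (Sym2 V))).Reachable u v)
    (hFmax : ∀ F' : Finset (Sym2 V), (F' : Set (Sym2 V)) ⊆ G.edgeSet →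
      (fromEdgeSet (F' : Set (Sym2 V))).IsAcyclic →
      (∀ u v : V, G.Reachable u v → (fromEdgeSet (F' : Set (Sym2 V))).Reachable u v) →
      ∑ e ∈ F', w e ≤ ∑ e ∈ F, w e)
    {a b : V} (hab : G.Adj a b) {q : (fromEdgeSet (F : Set (Sym2 V))).Walk a b} (hq : q.IsPath)
    {f : Sym2 V} (hf : f ∈ q.edges) : w s(a, b) ≤ w f := by
  classical
  induction f with | h x y =>
  by_contra! hlt
  set F' := insert s(a, b) (F.erase s(x, y))
  have hfF : s(x, y) ∈ F := by simpa using (q.edges_subset_edgeSet hf).1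
  have hF' : fromEdgeSet (F' : Set (Sym2 V)) =
      (fromEdgeSet (F : Set (Sym2 V))).deleteEdges {s(x, y)} ⊔ edge a b := by
    rw [Finset.coe_insert, Finset.coe_erase, Set.insert_eq, fromEdgeSet_union, fromEdgeSet_sdiff,
      sup_comm]
    rfl
  have heF : s(a, b) ∉ F.erase s(x, y) := fun h => hFacyclic.not_reachable_deleteEdges hq hf <|
    Adj.reachable <| by simpa [hab.ne, and_comm] using h
  have hF'sub : (F' : Set (Sym2 V)) ⊆ G.edgeSet := by
    rw [Finset.coe_insert, Set.insert_subset_iff]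
    exact ⟨hab, (Finset.coe_subset.mpr (F.erase_subset _)).trans hFsub⟩
  have hsum := hFmax F' hF'sub (hF' ▸ hFacyclic.deleteEdges_sup_edge hq hf) fun u v huv =>
    hF' ▸ hFacyclic.reachable_le_deleteEdges_sup_edge hq hf u v (hFspanning u v huv)
  rw [Finset.sum_insert heF, ← Finset.add_sum_erase F w hfF] at hsum
  linarith

theorem stmt_14_general {V : Type*} (G : SimpleGraph V)
    (w : Sym2 V → ℝ) (F : Finset (Sym2 V))
    (hFsub : (F : Set (Sym2 V)) ⊆ G.edgeSet)
    (hFacyclic : (SimpleGraph.fromEdgeSet (F : Set (Sym2 V))).IsAcyclic)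
    (hFspanning : ∀ u v : V, G.Reachable u v →
      (SimpleGraph.fromEdgeSet (F : Set (Sym2 V))).Reachable u v)
    (hFmax : ∀ F' : Finset (Sym2 V), (F' : Set (Sym2 V)) ⊆ G.edgeSet →
      (SimpleGraph.fromEdgeSet (F' : Set (Sym2 V))).IsAcyclic →
      (∀ u v : V, G.Reachable u v →
        (SimpleGraph.fromEdgeSet (F' : Set (Sym2 V))).Reachable u v) →
      ∑ e ∈ F', w e ≤ ∑ e ∈ F, w e) :
    ∀ (u v : V) (r : ℝ),
      (∃ p : G.Walk u v, ∀ e ∈ p.edges, r ≤ w e) ↔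
      (∃ p : (SimpleGraph.fromEdgeSet (F : Set (Sym2 V))).Walk u v,
        ∀ e ∈ p.edges, r ≤ w e) := by
  intro u v r
  rw [← reachable_deleteEdges_setOf_not_iff, ← reachable_deleteEdges_setOf_not_iff]
  refine ⟨fun h => reachable_le_of_adj_le_reachable (fun a b hab => ?_) u v h,
    fun h => h.mono (deleteEdges_mono (G.fromEdgeSet_le.mpr (Set.sdiff_subset.trans hFsub)))⟩
  rw [deleteEdges_adj] at hab
  obtain ⟨q, hq⟩ := (hFspanning a b hab.1.reachable).exists_isPath
  refine reachable_deleteEdges_setOf_not_iff.mpr ⟨q, fun f hf => (not_not.mp hab.2).trans ?_⟩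
  exact weight_le_of_mem_edges_of_isPath hFsub hFacyclic hFspanning hFmax hab.1 hq hf

theorem stmt_14 {V : Type*} [Fintype V] [DecidableEq V] (G : SimpleGraph V)
    [DecidableRel G.Adj] (w : Sym2 V → ℝ) (F : Finset (Sym2 V))
    (hFsub : (F : Set (Sym2 V)) ⊆ G.edgeSet)
    (hFacyclic : (SimpleGraph.fromEdgeSet (F : Set (Sym2 V))).IsAcyclic)
    (hFspanning : ∀ u v : V, G.Reachable u v →
      (SimpleGraph.fromEdgeSet (F : Set (Sym2 V))).Reachable u v)
    (hFmax : ∀ F' : Finset (Sym2 V), (F' : Set (Sym2 V)) ⊆ G.edgeSet →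
      (SimpleGraph.fromEdgeSet (F' : Set (Sym2 V))).IsAcyclic →
      (∀ u v : V, G.Reachable u v →
        (SimpleGraph.fromEdgeSet (F' : Set (Sym2 V))).Reachable u v) →
      ∑ e ∈ F', w e ≤ ∑ e ∈ F, w e) :
    ∀ (u v : V) (r : ℝ),
      (∃ p : G.Walk u v, ∀ e ∈ p.edges, r ≤ w e) ↔
      (∃ p : (SimpleGraph.fromEdgeSet (F : Set (Sym2 V))).Walk u v,
        ∀ e ∈ p.edges, r ≤ w e) :=
  stmt_14_general G w F hFsub hFacyclic hFspanning hFmax
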